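/- Let ζ be a primitive 2^n-th root of unity in a field K of characteristic 0 with valuation ring O of residue characteristic 2, and suppose j_1, j_2, j_3, j_4 ∈ Z satisfy: ζ^{j_1}+ζ^{j_2}+ζ^{j_3}+ζ^{j_4} ∈ 4O, ζ^{j_1}+ωζ^{j_2}+ω²ζ^{j_3} ∈ 4O, and ζ^{j_1}+ω²ζ^{j_2}+ωζ^{j_3} ∈ 4O, where ω is a primitive cube root of unity in O. Then ζ^{j_1} = ζ^{j_2} = ζ^{j_3} = ζ^{j_4}. -/

import Mathlib

/-!
Every `xᵢ = ζ ^ jᵢ` and `ω` is a root of unity, hence lies in `O`, so everything happens in the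
local domain `O`, where `3 = 1 + 2` is a unit. Combining the two `ω`-twisted sums with the weights
`1 - ω², 1 - ω` (resp. `1 - ω, 1 - ω²`) gives `3 (x₁ - x₂)` (resp. `3 (x₁ - x₃)`), so
`x₁ ≡ x₂ ≡ x₃ mod 4`, and then the untwisted sum gives `x₄ ≡ x₁ mod 4`. Finally, two `2`-power
roots of unity congruent mod `4` are equal: for their quotient `η`, `1 - η² = (1 - η)(1 + η)`
gives `η² = 1` by induction, and `η = -1` would make `4 ∣ 2`, so `2` a unit.
-/

theorem ValuationSubring.mem_of_pow_eq_one {K : Type*} [Field K] (O : ValuationSubring K)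
    {x : K} {N : ℕ} (hN : N ≠ 0) (hx : x ^ N = 1) : x ∈ O := by
  rw [← O.valuation_le_one_iff, ← pow_le_one_iff hN, ← map_pow, hx, map_one]

theorem ValuationSubring.dvd_iff_exists_mem {K : Type*} [Field K] {O : ValuationSubring K}
    {a c : O} : c ∣ a ↔ ∃ y ∈ O, (a : K) = c * y :=
  ⟨fun ⟨y, h⟩ => ⟨y, y.2, congrArg Subtype.val h⟩, fun ⟨y, hy, h⟩ => ⟨⟨y, hy⟩, Subtype.ext h⟩⟩

theorem IsPrimitiveRoot.sq_add_self_add_one {R : Type*} [CommRing R] [IsDomain R] {w : R}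
    (hw : IsPrimitiveRoot w 3) : w ^ 2 + w + 1 = 0 := by
  have h := hw.geom_sum_eq_zero (by norm_num)
  simp only [Finset.sum_range_succ, Finset.sum_range_zero, pow_zero, pow_one, zero_add] at h
  linear_combination h

theorem IsLocalRing.isUnit_three_of_not_isUnit_two {R : Type*} [CommRing R] [IsLocalRing R]
    (h2 : ¬IsUnit (2 : R)) : IsUnit (3 : R) :=
  (isUnit_or_isUnit_of_add_one (a := 3) (b := -2) (by norm_num)).resolve_right
    (by rwa [IsUnit.neg_iff])

theorem dvd_sub_of_dvd_add_mul_add_mul {R : Type*} [CommRing R] {w d a b c : R}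
    (hw : w ^ 2 + w + 1 = 0) (h3 : IsUnit (3 : R)) (h : d ∣ a + w * b + w ^ 2 * c)
    (h' : d ∣ a + w ^ 2 * b + w * c) : d ∣ a - b := by
  have hcomb : (1 - w ^ 2) * (a + w * b + w ^ 2 * c) + (1 - w) * (a + w ^ 2 * b + w * c) =
      3 * (a - b) := by
    linear_combination (-a + (3 - 2 * w) * b - w * (w - 1) * c) * hw
  rw [← h3.dvd_mul_left, ← hcomb]
  exact dvd_add (h.mul_left _) (h'.mul_left _)

section Domain

variable {R : Type*} [CommRing R] [IsDomain R]

theorem eq_one_of_four_dvd_one_sub (h2 : ¬IsUnit (2 : R)) :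
    ∀ {n : ℕ} {η : R}, η ^ 2 ^ n = 1 → 4 ∣ 1 - η → η = 1
  | 0, _, hη, _ => by simpa using hη
  | n + 1, η, hη, h4 => by
    have hsq : η ^ 2 = 1 := by
      refine eq_one_of_four_dvd_one_sub h2 (n := n) (by rwa [← pow_mul, ← pow_succ']) ?_
      rw [show 1 - η ^ 2 = (1 - η) * (1 + η) by ring]
      exact h4.mul_right _
    rcases sq_eq_one_iff.1 hsq with h | rfl
    · exact h
    · obtain ⟨t, ht⟩ : (4 : R) ∣ 2 := by simpa [one_add_one_eq_two] using h4
      have h2t : (2 : R) * (2 * t - 1) = 0 := by linear_combination -ht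
      rcases mul_eq_zero.1 h2t with h | h
      · linear_combination -h
      · exact absurd (IsUnit.of_mul_eq_one t (by linear_combination h)) h2

theorem eq_of_four_dvd_sub (h2 : ¬IsUnit (2 : R)) {n : ℕ} {x y : R} (hx : x ^ 2 ^ n = 1)
    (hy : y ^ 2 ^ n = 1) (h : 4 ∣ x - y) : x = y := by
  obtain ⟨u, rfl⟩ := IsUnit.of_pow_eq_one hx (by positivity)
  have hu : u ^ 2 ^ n = 1 := Units.ext (by rw [Units.val_pow_eq_pow_val]; exact hx)
  refine ((Units.mul_inv_eq_one (u := u)).1 ?_).symm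
  refine eq_one_of_four_dvd_one_sub h2 (n := n) ?_ ?_
  · rw [mul_pow, hy, one_mul, ← Units.val_pow_eq_pow_val, inv_pow, hu, inv_one, Units.val_one]
  · rw [show 1 - y * ↑u⁻¹ = (↑u - y) * ↑u⁻¹ by simp [sub_mul]]
    exact h.mul_right _

theorem eq_of_four_dvd_sums [IsLocalRing R] (h2 : ¬IsUnit (2 : R)) {w : R}
    (hw : IsPrimitiveRoot w 3) {n : ℕ} {x₁ x₂ x₃ x₄ : R} (hx₁ : x₁ ^ 2 ^ n = 1)
    (hx₂ : x₂ ^ 2 ^ n = 1) (hx₃ : x₃ ^ 2 ^ n = 1) (hx₄ : x₄ ^ 2 ^ n = 1)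
    (h : 4 ∣ x₁ + x₂ + x₃ + x₄) (h' : 4 ∣ x₁ + w * x₂ + w ^ 2 * x₃)
    (h'' : 4 ∣ x₁ + w ^ 2 * x₂ + w * x₃) : x₁ = x₂ ∧ x₂ = x₃ ∧ x₃ = x₄ := by
  have hw' := hw.sq_add_self_add_one
  have h3 := IsLocalRing.isUnit_three_of_not_isUnit_two h2
  obtain rfl : x₁ = x₂ :=
    eq_of_four_dvd_sub h2 hx₁ hx₂ (dvd_sub_of_dvd_add_mul_add_mul hw' h3 h' h'')
  obtain rfl : x₁ = x₃ := eq_of_four_dvd_sub h2 hx₁ hx₃ <|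
    dvd_sub_of_dvd_add_mul_add_mul hw' h3 (by rwa [add_right_comm]) (by rwa [add_right_comm])
  have h₄₁ : 4 ∣ x₄ - x₁ := by
    rw [show x₄ - x₁ = x₁ + x₁ + x₁ + x₄ - 4 * x₁ by ring]
    exact h.sub (dvd_mul_right 4 x₁)
  exact ⟨rfl, rfl, (eq_of_four_dvd_sub h2 hx₄ hx₁ h₄₁).symm⟩

end Domain

theorem stmt_6_general (n : ℕ) {K : Type*} [Field K]
    (O : ValuationSubring K) (h2 : ¬ IsUnit (2 : O))
    (ζ : K) (hζ : IsPrimitiveRoot ζ (2 ^ n))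
    (ω : K) (hω : IsPrimitiveRoot ω 3)
    (j₁ j₂ j₃ j₄ : ℤ)
    (h1 : ∃ y : K, y ∈ O ∧ ζ ^ j₁ + ζ ^ j₂ + ζ ^ j₃ + ζ ^ j₄ = 4 * y)
    (h2' : ∃ y : K, y ∈ O ∧ ζ ^ j₁ + ω * ζ ^ j₂ + ω ^ 2 * ζ ^ j₃ = 4 * y)
    (h3 : ∃ y : K, y ∈ O ∧ ζ ^ j₁ + ω ^ 2 * ζ ^ j₂ + ω * ζ ^ j₃ = 4 * y) :
    ζ ^ j₁ = ζ ^ j₂ ∧ ζ ^ j₂ = ζ ^ j₃ ∧ ζ ^ j₃ = ζ ^ j₄ := by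
  have hpow (j : ℤ) : (ζ ^ j) ^ 2 ^ n = 1 := by
    rw [← zpow_natCast, ← zpow_mul, mul_comm, zpow_mul, zpow_natCast, hζ.pow_eq_one, one_zpow]
  let x (j : ℤ) : O := ⟨ζ ^ j, O.mem_of_pow_eq_one (by positivity) (hpow j)⟩
  let w : O := ⟨ω, O.mem_of_pow_eq_one three_ne_zero hω.pow_eq_one⟩
  have hw : IsPrimitiveRoot w 3 := hω.of_map_of_injective (f := O.subtype) Subtype.val_injective
  have hx (j : ℤ) : x j ^ 2 ^ n = 1 := Subtype.ext (hpow j)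
  obtain ⟨h₁₂, h₂₃, h₃₄⟩ := eq_of_four_dvd_sums h2 hw (hx j₁) (hx j₂) (hx j₃) (hx j₄)
    (O.dvd_iff_exists_mem.2 h1) (O.dvd_iff_exists_mem.2 h2') (O.dvd_iff_exists_mem.2 h3)
  exact ⟨congrArg Subtype.val h₁₂, congrArg Subtype.val h₂₃, congrArg Subtype.val h₃₄⟩

/-- with `ζ` a primitive `2^n`-th root of unity and `ω` a primitive cube root of
unity in the valuation ring `O` (of residue characteristic 2) of a characteristic-zero field
`K`, if `ζ^{j₁}+ζ^{j₂}+ζ^{j₃}+ζ^{j₄} ∈ 4O`, `ζ^{j₁}+ωζ^{j₂}+ω²ζ^{j₃} ∈ 4O` and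
`ζ^{j₁}+ω²ζ^{j₂}+ωζ^{j₃} ∈ 4O`, then `ζ^{j₁} = ζ^{j₂} = ζ^{j₃} = ζ^{j₄}`. -/
theorem stmt_6 (n : ℕ) (hn : 0 < n) {K : Type*} [Field K] [CharZero K]
    (O : ValuationSubring K) (h2 : ¬ IsUnit (2 : O))
    (ζ : K) (hζ : IsPrimitiveRoot ζ (2 ^ n))
    (ω : K) (hω : IsPrimitiveRoot ω 3) (hωO : ω ∈ O)
    (j₁ j₂ j₃ j₄ : ℤ)
    (h1 : ∃ y : K, y ∈ O ∧ ζ ^ j₁ + ζ ^ j₂ + ζ ^ j₃ + ζ ^ j₄ = 4 * y)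
    (h2' : ∃ y : K, y ∈ O ∧ ζ ^ j₁ + ω * ζ ^ j₂ + ω ^ 2 * ζ ^ j₃ = 4 * y)
    (h3 : ∃ y : K, y ∈ O ∧ ζ ^ j₁ + ω ^ 2 * ζ ^ j₂ + ω * ζ ^ j₃ = 4 * y) :
    ζ ^ j₁ = ζ ^ j₂ ∧ ζ ^ j₂ = ζ ^ j₃ ∧ ζ ^ j₃ = ζ ^ j₄ :=
  stmt_6_general n O h2 ζ hζ ω hω j₁ j₂ j₃ j₄ h1 h2' h3
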